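/- Let L ∈ 𝐋 and V ∈ 𝐕(L). Then for all u, v ∈ [0,1] one has d_ABW(L+uV, L+vV) = |u−v|·‖V‖_F. In particular, d_ABW(L, L+uV) = u·‖V‖_F for every u ∈ [0,1], so u ↦ L+uV is a constant speed geodesic for the pseudometric d_ABW. -/

import Mathlib

open Matrix Filter Topology

/-- Square matrices of size `dT × dT`, indexed by blocks: index `(t, i)` is
row/column `i` within block `t`. -/
abbrev Mat (d T : ℕ) := Matrix (Fin T × Fin d) (Fin T × Fin d) ℝ

/-- The `t`-th diagonal `d × d` block of a `dT × dT` matrix. -/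
def blk {d T : ℕ} (A : Mat d T) (t : Fin T) : Matrix (Fin d) (Fin d) ℝ :=
  fun i j => A (t, i) (t, j)

/-- The `t`-th block column of a `dT × dT` matrix, a `dT × d` matrix. -/
def colBlk {d T : ℕ} (A : Mat d T) (t : Fin T) : Matrix (Fin T × Fin d) (Fin d) ℝ :=
  fun p j => A p (t, j)

/-- Membership in `𝐋`: block lower triangular matrices. -/
def memL {d T : ℕ} (A : Mat d T) : Prop :=
  ∀ (t s : Fin T) (i j : Fin d), t < s → A (t, i) (s, j) = 0

/-- Membership in `𝐎`: block diagonal matrices with orthogonal `d × d` diagonal blocks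
(equivalently: block diagonal and orthogonal). -/
def memO {d T : ℕ} (O : Mat d T) : Prop :=
  (∀ (t s : Fin T) (i j : Fin d), t ≠ s → O (t, i) (s, j) = 0) ∧ Oᵀ * O = 1

/-- The Frobenius norm of a real matrix. -/
noncomputable def frobNorm {m n : Type*} [Fintype m] [Fintype n] (A : Matrix m n ℝ) : ℝ :=
  Real.sqrt (∑ i, ∑ j, (A i j) ^ 2)

/-- The Frobenius inner product of two real matrices. -/
noncomputable def frobInner {m n : Type*} [Fintype m] [Fintype n] (A B : Matrix m n ℝ) : ℝ :=
  ∑ i, ∑ j, A i j * B i j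

/-- The adapted Bures–Wasserstein distance `d_ABW(L, M) = inf_{O ∈ 𝐎} ‖L - M O‖_F`. -/
noncomputable def dABW {d T : ℕ} (L M : Mat d T) : ℝ :=
  sInf {r : ℝ | ∃ O : Mat d T, memO O ∧ r = frobNorm (L - M * O)}

/-- The set `𝐎*(L, M)` of optimizers of `inf_{O ∈ 𝐎} ‖L - M O‖_F`. -/
noncomputable def OStar {d T : ℕ} (L M : Mat d T) : Set (Mat d T) :=
  {O | memO O ∧ frobNorm (L - M * O) = dABW L M}

/-- The set `𝐕(L) = {M P - L : M ∈ 𝐋, P ∈ 𝐎*(L, M)}`. -/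
noncomputable def VSet {d T : ℕ} (L : Mat d T) : Set (Mat d T) :=
  {V | ∃ M P : Mat d T, memL M ∧ P ∈ OStar L M ∧ V = M * P - L}

/-- The set `𝒱(L) = {V ∈ 𝐋 : (Vᵀ L)_{t,t} is symmetric for all t}`. -/
def calV {d T : ℕ} (L : Mat d T) : Set (Mat d T) :=
  {V | memL V ∧ ∀ t : Fin T, (blk (Vᵀ * L) t).IsSymm}

/-- The set `𝐋^reg = {L ∈ 𝐋 : (Lᵀ L)_{t,t} is positive definite for all t}`. -/
def LReg {d T : ℕ} : Set (Mat d T) :=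
  {L | memL L ∧ ∀ t : Fin T, (blk (Lᵀ * L) t).PosDef}

/-- The sum of the singular values of a real square matrix `A`,
i.e. the trace of the positive semidefinite square root of `Aᵀ A`. -/
noncomputable def svSum {n : ℕ} (A : Matrix (Fin n) (Fin n) ℝ) : ℝ :=
  ((Matrix.posSemidef_conjTranspose_mul_self A).1.eigenvectorUnitary *
    diagonal ((RCLike.ofReal : ℝ → ℝ) ∘ Real.sqrt ∘
      (Matrix.posSemidef_conjTranspose_mul_self A).1.eigenvalues) *
    (star (Matrix.posSemidef_conjTranspose_mul_self A).1.eigenvectorUnitary :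
      Matrix (Fin n) (Fin n) ℝ)).trace

/-- The operator norm of a real matrix: the supremum of the euclidean norm `‖A x‖₂`
over the euclidean unit ball. -/
noncomputable def opNorm {m n : Type*} [Fintype m] [Fintype n] (A : Matrix m n ℝ) : ℝ :=
  sSup {r : ℝ | ∃ x : n → ℝ, (∑ j, (x j) ^ 2) ≤ 1 ∧ r = Real.sqrt (∑ i, (A.mulVec x i) ^ 2)}

/-!
`d_ABW` is a pseudometric dominated by the Frobenius distance, and for `V = M P - L` with
`P ∈ 𝐎*(L, M)` the optimality of `P` gives `d_ABW(L, L + V) = d_ABW(L, M) = ‖V‖_F`.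
For a pseudometric `δ` with `δ(x, y) ≤ ‖x - y‖`, a segment whose endpoints are at distance
exactly `‖V‖` is a geodesic: the triangle inequality along `x, x + uV, x + wV, x + V` forces
every intermediate distance to attain its upper bound `|u - w| ‖V‖`.
-/

theorem eq_abs_sub_mul_norm_of_le_norm_sub {E : Type*} [SeminormedAddCommGroup E]
    [NormedSpace ℝ E] (δ : E → E → ℝ) (hcomm : ∀ x y, δ x y = δ y x)
    (htri : ∀ x y z, δ x z ≤ δ x y + δ y z) (hle : ∀ x y, δ x y ≤ ‖x - y‖)
    {x v : E} (hv : ‖v‖ ≤ δ x (x + v)) {u w : ℝ} (hu : u ∈ Set.Icc (0 : ℝ) 1)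
    (hw : w ∈ Set.Icc (0 : ℝ) 1) :
    δ (x + u • v) (x + w • v) = |u - w| * ‖v‖ := by
  have hseg : ∀ a b : ℝ, δ (x + a • v) (x + b • v) ≤ |a - b| * ‖v‖ := fun a b => by
    simpa [← sub_smul, norm_smul] using hle (x + a • v) (x + b • v)
  wlog huw : u ≤ w generalizing u w
  · rw [hcomm, abs_sub_comm]
    exact this hw hu (le_of_not_ge huw)
  have h₀ : δ x (x + u • v) ≤ u * ‖v‖ := by
    simpa [abs_of_nonneg hu.1] using hseg 0 u
  have h₁ : δ (x + w • v) (x + v) ≤ (1 - w) * ‖v‖ := by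
    simpa [abs_of_nonpos (sub_nonpos.mpr hw.2)] using hseg w 1
  refine le_antisymm (hseg u w) ?_
  rw [abs_of_nonpos (sub_nonpos.mpr huw)]
  linarith [htri x (x + u • v) (x + v), htri (x + u • v) (x + w • v) (x + v)]

section Frobenius

attribute [local instance] Matrix.frobeniusNormedAddCommGroup Matrix.frobeniusNormedSpace

theorem frobNorm_eq_norm {m n : Type*} [Fintype m] [Fintype n] (A : Matrix m n ℝ) :
    frobNorm A = ‖A‖ := by
  simp only [frobNorm, frobenius_norm_def, Real.sqrt_eq_rpow, Real.rpow_two, Real.norm_eq_abs,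
    sq_abs]

theorem frobNorm_eq_sqrt_trace {m n : Type*} [Fintype m] [Fintype n] (A : Matrix m n ℝ) :
    frobNorm A = Real.sqrt (Aᵀ * A).trace := by
  rw [frobNorm, Finset.sum_comm]
  simp [Matrix.trace, Matrix.mul_apply, sq]

theorem frobNorm_mul_of_mul_transpose_eq_one {m n : Type*} [Fintype m] [Fintype n]
    [DecidableEq n] (A : Matrix m n ℝ) {O : Matrix n n ℝ} (hO : O * Oᵀ = 1) :
    frobNorm (A * O) = frobNorm A := by
  rw [frobNorm_eq_sqrt_trace, frobNorm_eq_sqrt_trace, transpose_mul, Matrix.mul_assoc,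
    trace_mul_comm, Matrix.mul_assoc, Matrix.mul_assoc, hO, Matrix.mul_one]

section AdaptedBuresWasserstein

variable {d T : ℕ}

theorem memO_one : memO (1 : Mat d T) :=
  ⟨fun _ _ _ _ hts => one_apply_ne fun h => hts (congrArg Prod.fst h), by simp⟩

theorem memO.mul {O₁ O₂ : Mat d T} (h₁ : memO O₁) (h₂ : memO O₂) : memO (O₁ * O₂) := by
  refine ⟨fun t s i j hts => ?_, ?_⟩
  · refine (mul_apply ..).trans (Finset.sum_eq_zero fun ⟨r, k⟩ _ => ?_)
    rcases eq_or_ne r t with rfl | hr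
    · rw [h₂.1 r s k j hts, mul_zero]
    · rw [h₁.1 t r i k (Ne.symm hr), zero_mul]
  · rw [transpose_mul, Matrix.mul_assoc, ← Matrix.mul_assoc O₁ᵀ, h₁.2, Matrix.one_mul, h₂.2]

theorem memO.mul_transpose {O : Mat d T} (h : memO O) : O * Oᵀ = 1 :=
  mul_eq_one_comm.mp h.2

theorem memO.transpose {O : Mat d T} (h : memO O) : memO Oᵀ :=
  ⟨fun t s i j hts => h.1 s t j i (Ne.symm hts), by
    rw [transpose_transpose]; exact h.mul_transpose⟩

theorem dABW_le (A B : Mat d T) {O : Mat d T} (hO : memO O) :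
    dABW A B ≤ frobNorm (A - B * O) :=
  csInf_le ⟨0, by rintro r ⟨O, -, rfl⟩; exact Real.sqrt_nonneg _⟩ ⟨O, hO, rfl⟩

theorem le_dABW {A B : Mat d T} {r : ℝ} (h : ∀ O, memO O → r ≤ frobNorm (A - B * O)) :
    r ≤ dABW A B :=
  le_csInf ⟨_, 1, memO_one, rfl⟩ (by rintro s ⟨O, hO, rfl⟩; exact h O hO)

theorem dABW_le_norm_sub (A B : Mat d T) : dABW A B ≤ ‖A - B‖ := by
  simpa [frobNorm_eq_norm] using dABW_le A B memO_one

theorem dABW_comm (A B : Mat d T) : dABW A B = dABW B A := by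
  suffices h : ∀ A B : Mat d T, dABW B A ≤ dABW A B from le_antisymm (h B A) (h A B)
  intro A B
  refine le_dABW fun O hO => ?_
  calc dABW B A ≤ frobNorm (B - A * Oᵀ) := dABW_le B A hO.transpose
    _ = frobNorm ((A * Oᵀ - B) * O) := by
      rw [frobNorm_mul_of_mul_transpose_eq_one _ hO.mul_transpose, frobNorm_eq_norm,
        frobNorm_eq_norm, norm_sub_rev]
    _ = frobNorm (A - B * O) := by rw [sub_mul, Matrix.mul_assoc, hO.2, Matrix.mul_one]

theorem dABW_triangle (A B C : Mat d T) : dABW A C ≤ dABW A B + dABW B C := by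
  suffices h : ∀ O₁ O₂, memO O₁ → memO O₂ →
      dABW A C ≤ frobNorm (A - B * O₁) + frobNorm (B - C * O₂) by
    have : dABW A C - dABW B C ≤ dABW A B := le_dABW fun O₁ h₁ => by
      have : dABW A C - frobNorm (A - B * O₁) ≤ dABW B C :=
        le_dABW fun O₂ h₂ => by linarith [h O₁ O₂ h₁ h₂]
      linarith
    linarith
  intro O₁ O₂ h₁ h₂
  calc dABW A C ≤ frobNorm (A - C * (O₂ * O₁)) := dABW_le A C (h₂.mul h₁)
    _ = ‖(A - B * O₁) + (B - C * O₂) * O₁‖ := by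
      rw [frobNorm_eq_norm, sub_mul, ← Matrix.mul_assoc]; congr 1; abel
    _ ≤ frobNorm (A - B * O₁) + frobNorm ((B - C * O₂) * O₁) := by
      simpa only [frobNorm_eq_norm] using norm_add_le _ _
    _ = frobNorm (A - B * O₁) + frobNorm (B - C * O₂) := by
      rw [frobNorm_mul_of_mul_transpose_eq_one _ h₁.mul_transpose]

theorem dABW_le_dABW_mul {L M P : Mat d T} (hP : memO P) : dABW L M ≤ dABW L (M * P) :=
  le_dABW fun O hO => by simpa only [Matrix.mul_assoc] using dABW_le L M (hP.mul hO)

theorem norm_le_dABW_add_of_mem_VSet {L V : Mat d T} (hV : V ∈ VSet L) :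
    ‖V‖ ≤ dABW L (L + V) := by
  obtain ⟨M, P, -, ⟨hP, hPopt⟩, rfl⟩ := hV
  calc ‖M * P - L‖ = dABW L M := by rw [norm_sub_rev, ← frobNorm_eq_norm, hPopt]
    _ ≤ dABW L (M * P) := dABW_le_dABW_mul hP
    _ = dABW L (L + (M * P - L)) := by rw [add_sub_cancel]

end AdaptedBuresWasserstein

theorem stmt9_general (d T : ℕ) (L V : Mat d T) (hV : V ∈ VSet L) :
    ∀ u v : ℝ, u ∈ Set.Icc (0 : ℝ) 1 → v ∈ Set.Icc (0 : ℝ) 1 →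
      dABW (L + u • V) (L + v • V) = |u - v| * frobNorm V := by
  intro u v hu hv
  rw [frobNorm_eq_norm]
  exact eq_abs_sub_mul_norm_of_le_norm_sub dABW dABW_comm dABW_triangle dABW_le_norm_sub
    (norm_le_dABW_add_of_mem_VSet hV) hu hv

/-- for `V ∈ 𝐕(L)`, `d_ABW(L+uV, L+vV) = |u - v| ‖V‖_F` for `u, v ∈ [0,1]`;
in particular `u ↦ L + uV` is a constant speed geodesic. -/
theorem stmt9 (d T : ℕ) (hd : 0 < d) (hT : 0 < T) (L V : Mat d T)
    (hL : memL L) (hV : V ∈ VSet L) :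
    ∀ u v : ℝ, u ∈ Set.Icc (0 : ℝ) 1 → v ∈ Set.Icc (0 : ℝ) 1 →
      dABW (L + u • V) (L + v • V) = |u - v| * frobNorm V :=
  stmt9_general d T L V hV

end Frobenius
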